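/- arXiv:math/0007022 — 5 statements merged into one kernel-verified Lean document; each statement's English description precedes it below -/
import Mathlib

section
/- On the surface S ⊂ C^4 defined by the equations xy = (z²−1)z, zu = (y²−1)y, xu = (y²−1)(z²−1), the map ∂₁ given by ∂₁(x) = 0, ∂₁(z) = x², ∂₁(y) = (3z²−1)x, ∂₁(u) = 2z(y²−1)x + 2y(z²−1)(3z²−1) is a well-defined derivation of the coordinate ring of S (i.e., ∂₁ annihilates the three defining relations). -/
open MvPolynomial

/- Coordinates: `x = X 0`, `y = X 1`, `z = X 2`, `u = X 3`. -/

/-- Relation `xy = (z²-1)z`. -/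
noncomputable abbrev rel1 : MvPolynomial (Fin 4) ℂ :=
  X 0 * X 1 - ((X 2) ^ 2 - 1) * X 2

/-- Relation `zu = (y²-1)y`. -/
noncomputable abbrev rel2 : MvPolynomial (Fin 4) ℂ :=
  X 2 * X 3 - ((X 1) ^ 2 - 1) * X 1

/-- Relation `xu = (y²-1)(z²-1)`. -/
noncomputable abbrev rel3 : MvPolynomial (Fin 4) ℂ :=
  X 0 * X 3 - ((X 1) ^ 2 - 1) * ((X 2) ^ 2 - 1)

/-- The ideal `I` of the surface `S ⊂ ℂ⁴`. -/
noncomputable abbrev surfIdeal : Ideal (MvPolynomial (Fin 4) ℂ) :=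
  Ideal.span {rel1, rel2, rel3}

/-- The coordinate ring `ℂ[x,y,z,u]/I` of `S`. -/
abbrev surfRing4 : Type := MvPolynomial (Fin 4) ℂ ⧸ surfIdeal

/-- The prescribed values `∂₁x = 0`, `∂₁y = (3z²-1)x`, `∂₁z = x²`,
`∂₁u = 2z(y²-1)x + 2y(z²-1)(3z²-1)`. -/
noncomputable abbrev d1vals : Fin 4 → MvPolynomial (Fin 4) ℂ :=
  ![0,
    (3 * (X 2) ^ 2 - 1) * X 0,
    (X 0) ^ 2,
    2 * X 2 * ((X 1) ^ 2 - 1) * X 0 + 2 * X 1 * ((X 2) ^ 2 - 1) * (3 * (X 2) ^ 2 - 1)]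

/-- The derivation `∂₁` of `ℂ[x,y,z,u]` with the prescribed values on the variables. -/
noncomputable abbrev d1 : Derivation ℂ (MvPolynomial (Fin 4) ℂ) (MvPolynomial (Fin 4) ℂ) :=
  MvPolynomial.mkDerivation ℂ d1vals

/-! ∂₁ kills `rel1` and `rel3` identically and sends `rel2` to `x · rel3 - 2y(3z² - 1) · rel1`.
A derivation mapping the generators of an ideal into the ideal preserves it, and so descends to
the quotient ring. -/

theorem Derivation.map_mem_span_of_forall_mem {R A : Type*} [CommSemiring R] [CommSemiring A]
    [Algebra R A] (D : Derivation R A A) {s : Set A} (hs : ∀ a ∈ s, D a ∈ Ideal.span s) {p : A}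
    (hp : p ∈ Ideal.span s) : D p ∈ Ideal.span s := by
  induction hp using Submodule.span_induction with
  | mem a ha => exact hs a ha
  | zero => simp
  | add a b _ _ ha hb => simpa using add_mem ha hb
  | smul c a ha ih =>
    rw [smul_eq_mul, Derivation.leibniz]
    exact add_mem (Ideal.mul_mem_left _ c ih) (Ideal.mul_mem_right (D c) _ ha)

theorem Derivation.exists_quotient_mk_apply {R A : Type*} [CommRing R] [CommRing A] [Algebra R A]
    (D : Derivation R A A) {I : Ideal A} (hI : ∀ p ∈ I, D p ∈ I) :
    ∃ D' : Derivation R (A ⧸ I) (A ⧸ I),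
      ∀ p, D' (Ideal.Quotient.mk I p) = Ideal.Quotient.mk I (D p) := by
  have hD (p : A) (hp : Ideal.Quotient.mkₐ R I p = 0) : Ideal.Quotient.mkₐ R I (D p) = 0 := by
    rw [Ideal.Quotient.mkₐ_eq_mk, Ideal.Quotient.eq_zero_iff_mem] at hp ⊢
    exact hI p hp
  exact ⟨Derivation.liftOfSurjective (Ideal.Quotient.mkₐ_surjective R I) hD,
    Derivation.liftOfSurjective_apply (Ideal.Quotient.mkₐ_surjective R I) hD⟩

theorem d1_rel1_rel2_rel3 :
    d1 rel1 = 0 ∧ d1 rel2 = X 0 * rel3 - 2 * X 1 * (3 * X 2 ^ 2 - 1) * rel1 ∧ d1 rel3 = 0 := by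
  refine ⟨?_, ?_, ?_⟩ <;>
  simp only [map_sub, Derivation.leibniz, Derivation.leibniz_pow, Derivation.map_one_eq_zero,
      mkDerivation_X, d1vals, Matrix.cons_val, Matrix.cons_val_zero, Matrix.cons_val_one, smul_eq_mul,
      nsmul_eq_mul, Nat.add_one_sub_one, pow_one] <;>
  ring

/-- `∂₁` annihilates the three defining relations of `S` modulo `I`, hence descends
to a well-defined derivation of the coordinate ring of `S` taking the prescribed
values on `x, y, z, u`. -/
theorem stmt_6 :
    (d1 rel1 ∈ surfIdeal ∧ d1 rel2 ∈ surfIdeal ∧ d1 rel3 ∈ surfIdeal) ∧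
    ∃ D : Derivation ℂ surfRing4 surfRing4,
      ∀ i : Fin 4, D (Ideal.Quotient.mk surfIdeal (X i)) =
        Ideal.Quotient.mk surfIdeal (d1vals i) := by
  have hrel1 : rel1 ∈ surfIdeal := Ideal.subset_span (by simp)
  have hrel3 : rel3 ∈ surfIdeal := Ideal.subset_span (by simp)
  have hgens : d1 rel1 ∈ surfIdeal ∧ d1 rel2 ∈ surfIdeal ∧ d1 rel3 ∈ surfIdeal := by
    obtain ⟨h1, h2, h3⟩ := d1_rel1_rel2_rel3
    refine ⟨h1 ▸ zero_mem _, ?_, h3 ▸ zero_mem _⟩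
    rw [h2]
    exact sub_mem (Ideal.mul_mem_left _ _ hrel3) (Ideal.mul_mem_left _ _ hrel1)
  have hpres (p : MvPolynomial (Fin 4) ℂ) (hp : p ∈ surfIdeal) : d1 p ∈ surfIdeal :=
    d1.map_mem_span_of_forall_mem (by rintro a (rfl | rfl | rfl) <;> simp only [hgens]) hp
  obtain ⟨D, hD⟩ := d1.exists_quotient_mk_apply hpres
  exact ⟨hgens, D, fun i ↦ by rw [hD, mkDerivation_X]⟩
end

section
/- The derivation ∂₁ on the coordinate ring of S ⊂ C^4 (defined by ∂₁(x)=0, ∂₁(z)=x², ∂₁(y)=(3z²−1)x, ∂₁(u)=2z(y²−1)x+2y(z²−1)(3z²−1), where S is cut out by xy=(z²−1)z, zu=(y²−1)y, xu=(y²−1)(z²−1)) is locally nilpotent. -/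
/-!
Elements on which a derivation is locally nilpotent form a subalgebra (general Leibniz rule),
so it suffices to check the generators. On `ℂ[x,y,z,u]` the derivation `∂₁` is triangular:
`∂₁x = 0`, `∂₁z ∈ ℂ[x]`, `∂₁y ∈ ℂ[x,z]`, `∂₁u ∈ ℂ[x,y,z]`, hence locally nilpotent. It preserves
the ideal of `S`, since `∂₁` kills the first and third relations and
`∂₁(zu - (y²-1)y) = x·rel₃ - 2y(3z²-1)·rel₁`, so it descends to a locally nilpotent derivation
of the coordinate ring.
-/

open MvPolynomial

namespace Derivation

open Finset

section Semiring

variable {R A : Type*} [CommSemiring R] [CommSemiring A] [Algebra R A] (D : Derivation R A A)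

theorem iterate_leibniz (n : ℕ) (a b : A) :
    D^[n] (a * b) = ∑ ij ∈ antidiagonal n, n.choose ij.1 • (D^[ij.1] a * D^[ij.2] b) := by
  induction n with
  | zero => simp
  | succ n ih =>
    rw [sum_antidiagonal_choose_succ_nsmul (M := A) (fun i j => D^[i] a * D^[j] b) n]
    simp only [Function.iterate_succ_apply', ih, map_sum, map_nsmul, leibniz, smul_eq_mul,
      smul_add, sum_add_distrib]
    congr 1
    refine sum_congr rfl fun ⟨i, j⟩ hij ↦ ?_
    rw [n.choose_symm_of_eq_add (mem_antidiagonal.1 hij).symm, mul_comm]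

theorem iterate_eq_zero_of_le {a : A} {m n : ℕ} (ha : D^[m] a = 0) (hmn : m ≤ n) :
    D^[n] a = 0 := by
  obtain ⟨k, rfl⟩ := Nat.exists_eq_add_of_le hmn
  rw [add_comm, Function.iterate_add_apply, ha, iterate_map_zero]

/-- `Nil(D)` in Freudenburg's notation. -/
def nilSubalgebra : Subalgebra R A where
  carrier := {a | ∃ n, D^[n] a = 0}
  zero_mem' := ⟨0, rfl⟩
  add_mem' := by
    rintro a b ⟨m, ha⟩ ⟨n, hb⟩
    refine ⟨max m n, ?_⟩
    rw [iterate_map_add, D.iterate_eq_zero_of_le ha (le_max_left m n),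
      D.iterate_eq_zero_of_le hb (le_max_right m n), add_zero]
  mul_mem' := by
    rintro a b ⟨m, ha⟩ ⟨n, hb⟩
    refine ⟨m + n, ?_⟩
    rw [iterate_leibniz]
    refine sum_eq_zero fun ⟨i, j⟩ hij ↦ ?_
    rcases le_or_gt m i with hmi | him
    · rw [D.iterate_eq_zero_of_le ha hmi, zero_mul, smul_zero]
    · have hnj : n ≤ j := by rw [HasAntidiagonal.mem_antidiagonal] at hij; omega
      rw [D.iterate_eq_zero_of_le hb hnj, mul_zero, smul_zero]
  algebraMap_mem' r := ⟨1, D.map_algebraMap r⟩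

variable {D} in
theorem mem_nilSubalgebra_of_apply_mem {a : A} (h : D a ∈ D.nilSubalgebra) :
    a ∈ D.nilSubalgebra :=
  let ⟨n, hn⟩ := h
  ⟨n + 1, hn⟩

end Semiring

section Quotient

variable {R A : Type*} [CommRing R] [CommRing A] [Algebra R A] (D : Derivation R A A)

theorem apply_mem_span_of_forall {s : Set A} (hs : ∀ a ∈ s, D a ∈ Ideal.span s) :
    ∀ a ∈ Ideal.span s, D a ∈ Ideal.span s := by
  intro a ha
  induction ha using Submodule.span_induction with
  | mem a ha => exact hs a ha
  | zero => simp
  | add a b _ _ ha hb => rw [map_add]; exact add_mem ha hb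
  | smul c a ha hDa =>
    rw [smul_eq_mul, leibniz, smul_eq_mul, smul_eq_mul]
    exact add_mem (Ideal.mul_mem_left _ _ hDa) (Ideal.mul_mem_right _ _ ha)

variable {I : Ideal A} (hI : ∀ a ∈ I, D a ∈ I)

noncomputable def quotient : Derivation R (A ⧸ I) (A ⧸ I) :=
  liftOfSurjective (Ideal.Quotient.mkₐ_surjective R I) fun a ha => by
    rw [Ideal.Quotient.mkₐ_eq_mk, Ideal.Quotient.eq_zero_iff_mem] at ha ⊢
    exact hI a ha

theorem quotient_mk (a : A) :
    D.quotient hI (Ideal.Quotient.mk I a) = Ideal.Quotient.mk I (D a) := by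
  unfold quotient
  exact liftOfSurjective_apply (f := Ideal.Quotient.mkₐ R I) _ _ a

theorem iterate_quotient_mk (n : ℕ) (a : A) :
    (D.quotient hI)^[n] (Ideal.Quotient.mk I a) = Ideal.Quotient.mk I (D^[n] a) := by
  induction n generalizing a with
  | zero => rfl
  | succ n ih => rw [Function.iterate_succ_apply, Function.iterate_succ_apply, quotient_mk, ih]

theorem nilSubalgebra_quotient_eq_top (h : D.nilSubalgebra = ⊤) :
    (D.quotient hI).nilSubalgebra = ⊤ := by
  refine eq_top_iff.2 fun b _ => ?_
  obtain ⟨a, rfl⟩ := Ideal.Quotient.mk_surjective b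
  obtain ⟨n, hn⟩ : a ∈ D.nilSubalgebra := h ▸ Algebra.mem_top
  exact ⟨n, by rw [iterate_quotient_mk, hn, map_zero]⟩

end Quotient

end Derivation

lemma d1_rel1 : d1 rel1 = 0 := by
  simp only [map_sub, Derivation.leibniz, Derivation.leibniz_pow, Derivation.map_one_eq_zero,
    mkDerivation_X, Matrix.cons_val, smul_eq_mul, nsmul_eq_mul]
  ring

lemma d1_rel2 : d1 rel2 = X 0 * rel3 - 2 * X 1 * (3 * X 2 ^ 2 - 1) * rel1 := by
  simp only [map_sub, Derivation.leibniz, Derivation.leibniz_pow, Derivation.map_one_eq_zero,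
    mkDerivation_X, Matrix.cons_val, smul_eq_mul, nsmul_eq_mul]
  ring

lemma d1_rel3 : d1 rel3 = 0 := by
  simp only [map_sub, Derivation.leibniz, Derivation.leibniz_pow, Derivation.map_one_eq_zero,
    mkDerivation_X, Matrix.cons_val, smul_eq_mul, nsmul_eq_mul]
  ring

lemma d1_apply_mem_surfIdeal : ∀ a ∈ surfIdeal, d1 a ∈ surfIdeal := by
  refine d1.apply_mem_span_of_forall ?_
  have h1 : rel1 ∈ surfIdeal := Ideal.subset_span (by simp)
  have h3 : rel3 ∈ surfIdeal := Ideal.subset_span (by simp)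
  rintro _ (rfl | rfl | rfl)
  · simp [d1_rel1]
  · rw [d1_rel2]
    exact sub_mem (Ideal.mul_mem_left _ _ h3) (Ideal.mul_mem_left _ _ h1)
  · simp [d1_rel3]

lemma d1_nilSubalgebra_eq_top : d1.nilSubalgebra = ⊤ := by
  set S := d1.nilSubalgebra
  have hx : X 0 ∈ S := ⟨1, by simp [mkDerivation_X]⟩
  have hz : X 2 ∈ S := Derivation.mem_nilSubalgebra_of_apply_mem <| by
    simp only [mkDerivation_X, d1vals, Matrix.cons_val]
    exact pow_mem hx 2
  have hy : X 1 ∈ S := Derivation.mem_nilSubalgebra_of_apply_mem <| by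
    simp only [mkDerivation_X, d1vals, Matrix.cons_val]
    apply_rules [mul_mem, sub_mem, pow_mem, one_mem, ofNat_mem]
  have hu : X 3 ∈ S := Derivation.mem_nilSubalgebra_of_apply_mem <| by
    simp only [mkDerivation_X, d1vals, Matrix.cons_val]
    apply_rules [add_mem, mul_mem, sub_mem, pow_mem, one_mem, ofNat_mem]
  rw [eq_top_iff, ← adjoin_range_X, Algebra.adjoin_le_iff]
  rintro _ ⟨i, rfl⟩
  fin_cases i <;> assumption

/-- The derivation `∂₁` (with `∂₁x = 0`, `∂₁z = x²`, `∂₁y = (3z²-1)x`,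
`∂₁u = 2z(y²-1)x + 2y(z²-1)(3z²-1)`) on the coordinate ring of the surface
`S ⊂ ℂ⁴` cut out by `xy=(z²-1)z`, `zu=(y²-1)y`, `xu=(y²-1)(z²-1)` is
locally nilpotent. -/
theorem stmt_7 :
    ∃ D : Derivation ℂ surfRing4 surfRing4,
      (∀ i : Fin 4, D (Ideal.Quotient.mk surfIdeal (X i)) =
        Ideal.Quotient.mk surfIdeal (d1vals i)) ∧
      ∀ f : surfRing4, ∃ n : ℕ, (⇑D)^[n] f = 0 := by
  refine ⟨d1.quotient d1_apply_mem_surfIdeal, fun i => ?_, fun f => ?_⟩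
  · rw [Derivation.quotient_mk, mkDerivation_X]
  · have hf : f ∈ (d1.quotient d1_apply_mem_surfIdeal).nilSubalgebra := by
      rw [Derivation.nilSubalgebra_quotient_eq_top _ _ d1_nilSubalgebra_eq_top]
      trivial
    exact hf
end

section
/- The fiber over x = 0 of the projection (x,y,z,u) ↦ x on the surface S ⊂ C^4 defined by xy=(z²−1)z, zu=(y²−1)y, xu=(y²−1)(z²−1) consists of exactly four irreducible components: G₁ = {x=0, z=1}, G₂ = {x=0, z=−1}, G₃ = {x=0, z=0, y=1}, G₄ = {x=0, z=0, y=−1}, each isomorphic to an affine line. -/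
/-!
Over `x = 0` the first equation reads `(z² - 1) z = 0`, so `z ∈ {0, 1, -1}`. For `z = ±1` the
second equation determines `u` from the free coordinate `y`; for `z = 0` the third forces
`y² = 1` and leaves `u` free. The components are told apart by `z` and, when `z = 0`, by `y`;
on each component a coordinate function inverts the parametrization.
-/

def S4 : Set (ℂ × ℂ × ℂ × ℂ) :=
  {s | s.1 * s.2.1 = (s.2.2.1 ^ 2 - 1) * s.2.2.1 ∧
       s.2.2.1 * s.2.2.2 = (s.2.1 ^ 2 - 1) * s.2.1 ∧
       s.1 * s.2.2.2 = (s.2.1 ^ 2 - 1) * (s.2.2.1 ^ 2 - 1)}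

noncomputable def fiberComp : Fin 4 → ℂ → ℂ × ℂ × ℂ × ℂ :=
  ![fun y => (0, y, 1, (y ^ 2 - 1) * y),
    fun y => (0, y, -1, -((y ^ 2 - 1) * y)),
    fun u => (0, 1, 0, u),
    fun u => (0, -1, 0, u)]

lemma eq_zero_or_sq_eq_one_of_sq_sub_one_mul_eq_zero {R : Type*} [Ring R] [NoZeroDivisors R]
    {z : R} (h : (z ^ 2 - 1) * z = 0) : z = 0 ∨ z ^ 2 = 1 := by
  rcases mul_eq_zero.1 h with h | h
  · exact Or.inr (sub_eq_zero.1 h)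
  · exact Or.inl h

lemma exists_mem_range_fiberComp_of_mem_S4 {s : ℂ × ℂ × ℂ × ℂ} (hs : s ∈ S4)
    (hx : s.1 = 0) :
    ∃ i, s ∈ Set.range (fiberComp i) := by
  obtain ⟨x, y, z, u⟩ := s
  obtain ⟨h₁, h₂, h₃⟩ := hs
  dsimp only at hx h₁ h₂ h₃
  subst hx
  have hz : (z ^ 2 - 1) * z = 0 := by simpa using h₁.symm
  rcases eq_zero_or_sq_eq_one_of_sq_sub_one_mul_eq_zero hz with rfl | hz
  · have hy : y ^ 2 = 1 := by linear_combination h₃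
    rcases sq_eq_one_iff.1 hy with rfl | rfl
    · exact ⟨2, u, rfl⟩
    · exact ⟨3, u, rfl⟩
  · rcases sq_eq_one_iff.1 hz with rfl | rfl
    · exact ⟨0, y, by simp [fiberComp, ← h₂]⟩
    · exact ⟨1, y, by simp [fiberComp, ← h₂]⟩

lemma range_fiberComp_subset (i : Fin 4) : Set.range (fiberComp i) ⊆ {s ∈ S4 | s.1 = 0} := by
  rintro _ ⟨c, rfl⟩
  fin_cases i <;> refine ⟨⟨?_, ?_, ?_⟩, ?_⟩ <;> simp [fiberComp]

def fiberLabel (s : ℂ × ℂ × ℂ × ℂ) : ℂ × ℂ := (s.2.2.1, (1 - s.2.2.1 ^ 2) * s.2.1)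

lemma fiberLabel_fiberComp (i : Fin 4) (c : ℂ) :
    fiberLabel (fiberComp i c) = ![(1, 0), (-1, 0), (0, 1), (0, -1)] i := by
  fin_cases i <;> simp [fiberLabel, fiberComp]

lemma injective_fiberLabel_values :
    Function.Injective (![(1, 0), (-1, 0), (0, 1), (0, -1)] : Fin 4 → ℂ × ℂ) := by
  intro i j h
  fin_cases i <;> fin_cases j <;> first | rfl | norm_num [Prod.ext_iff] at h

lemma disjoint_range_fiberComp {i j : Fin 4} (hij : i ≠ j) :
    Disjoint (Set.range (fiberComp i)) (Set.range (fiberComp j)) := by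
  rw [Set.disjoint_left]
  rintro _ ⟨c, rfl⟩ ⟨d, hd⟩
  have h := congrArg fiberLabel hd
  rw [fiberLabel_fiberComp, fiberLabel_fiberComp] at h
  exact hij (injective_fiberLabel_values h).symm

noncomputable def fiberParam : Fin 4 → ℂ × ℂ × ℂ × ℂ → ℂ :=
  ![fun s => s.2.1, fun s => s.2.1, fun s => s.2.2.2, fun s => s.2.2.2]

lemma leftInverse_fiberParam_fiberComp (i : Fin 4) :
    Function.LeftInverse (fiberParam i) (fiberComp i) := by
  intro c
  fin_cases i <;> rfl

/-- The fiber over `x = 0` of the projection `(x,y,z,u) ↦ x` on `S` consists of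
exactly the four pairwise disjoint irreducible components
`G₁ = {x=0, z=1}`, `G₂ = {x=0, z=-1}`, `G₃ = {x=0, z=0, y=1}`,
`G₄ = {x=0, z=0, y=-1}`, each isomorphic to the affine line `ℂ`. -/
theorem stmt_8 :
    ({s ∈ S4 | s.1 = 0} = ⋃ i : Fin 4, Set.range (fiberComp i)) ∧
    (∀ i j : Fin 4, i ≠ j → Disjoint (Set.range (fiberComp i)) (Set.range (fiberComp j))) ∧
    (∀ i : Fin 4, Function.Injective (fiberComp i)) := by
  refine ⟨?_, fun _ _ => disjoint_range_fiberComp,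
    fun i => (leftInverse_fiberParam_fiberComp i).injective⟩
  refine Set.Subset.antisymm (fun s ⟨hs, hx⟩ => ?_) (Set.iUnion_subset range_fiberComp_subset)
  exact Set.mem_iUnion.2 (exists_mem_range_fiberComp_of_mem_S4 hs hx)
end

section
/- The surface S ⊂ C^4 defined by xy=(z²−1)z, zu=(y²−1)y, xu=(y²−1)(z²−1) is smooth, i.e., at every point of S the Jacobian matrix of the three defining equations has rank 2. -/
/-!
The left kernel of the Jacobian contains the syzygies `(u, z² - 1, -y)` and `(y² - 1, x, -z)` of
the defining equations, and these cannot both vanish (`z² = 1` forces `z ≠ 0`), so the rank is at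
most `2`. Conversely some `2 × 2` minor is nonzero: `yz` when `y, z ≠ 0`; otherwise the equations
give `u ≠ 0` (if `y = z = 0`), `u = 0` and `z ≠ 0` (if `y = 0`), or `y² = 1` (if `z = 0`), and the
minors `-u`, `-2z²`, `-2y` do the job away from characteristic `2`.
-/

open Matrix

namespace Matrix

variable {m n ι K : Type*} [Fintype n] [Field K]

theorem rank_lt_card_height_of_vecMul_eq_zero [Fintype m] {A : Matrix m n K} {v : m → K}
    (hv : v ≠ 0) (h : v ᵥ* A = 0) : A.rank < Fintype.card m := by
  have hker : 1 ≤ Module.finrank K (LinearMap.ker Aᵀ.mulVecLin) :=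
    Submodule.one_le_finrank_iff.2 <|
      (Submodule.ne_bot_iff _).2 ⟨v, by simpa [mulVec_transpose] using h, hv⟩
  have hsum := LinearMap.finrank_range_add_finrank_ker Aᵀ.mulVecLin
  rw [Module.finrank_fintype_fun_eq_card] at hsum
  rw [← rank_transpose, rank]
  omega

theorem card_le_rank_of_det_submatrix_ne_zero [Fintype ι] [DecidableEq ι] (A : Matrix m n K)
    (r : ι → m) (c : ι → n) (h : (A.submatrix r c).det ≠ 0) : Fintype.card ι ≤ A.rank := by
  rw [← rank_of_isUnit _ ((isUnit_iff_isUnit_det _).2 h.isUnit)]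
  exact rank_submatrix_le A r c

end Matrix

section Surface

variable {K : Type*} [Field K] {x y z u : K}

def OnSurface (x y z u : K) : Prop :=
  x * y = (z ^ 2 - 1) * z ∧ z * u = (y ^ 2 - 1) * y ∧ x * u = (y ^ 2 - 1) * (z ^ 2 - 1)

def surfaceJacobian (x y z u : K) : Matrix (Fin 3) (Fin 4) K :=
  !![y, x, 1 - 3 * z ^ 2, 0;
     0, 1 - 3 * y ^ 2, u, z;
     u, -2 * y * (z ^ 2 - 1), -2 * z * (y ^ 2 - 1), x]

theorem vecMul_surfaceJacobian_eq_zero_of_onSurface (hS : OnSurface x y z u) :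
    ![u, z ^ 2 - 1, -y] ᵥ* surfaceJacobian x y z u = 0 ∧
      ![y ^ 2 - 1, x, -z] ᵥ* surfaceJacobian x y z u = 0 := by
  obtain ⟨h₁, h₂, h₃⟩ := hS
  constructor <;> ext j <;> fin_cases j <;>
    simp [surfaceJacobian, vecMul, dotProduct, Fin.sum_univ_three]
  · ring
  · linear_combination h₃
  · linear_combination -2 * z * h₂
  · linear_combination -h₁
  · linear_combination -h₂
  · linear_combination -2 * y * h₁
  · linear_combination h₃
  · ring

theorem rank_surfaceJacobian_le_two (hS : OnSurface x y z u) :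
    (surfaceJacobian x y z u).rank ≤ 2 := by
  obtain ⟨hw₁, hw₂⟩ := vecMul_surfaceJacobian_eq_zero_of_onSurface hS
  suffices ![u, z ^ 2 - 1, -y] ≠ 0 ∨ ![y ^ 2 - 1, x, -z] ≠ 0 by
    rcases this with hv | hv
    · exact Nat.le_of_lt_succ (by simpa using rank_lt_card_height_of_vecMul_eq_zero hv hw₁)
    · exact Nat.le_of_lt_succ (by simpa using rank_lt_card_height_of_vecMul_eq_zero hv hw₂)
  by_contra! h
  have hz : z ^ 2 - 1 = 0 := by simpa using congrFun h.1 1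
  have hz' : z = 0 := by simpa using congrFun h.2 2
  simp [hz'] at hz

theorem two_le_rank_surfaceJacobian [NeZero (2 : K)] (hS : OnSurface x y z u) :
    2 ≤ (surfaceJacobian x y z u).rank := by
  obtain ⟨-, h₂, h₃⟩ := hS
  have minor (r c : Fin 2 → Fin _) (h : ((surfaceJacobian x y z u).submatrix r c).det ≠ 0) :
      2 ≤ (surfaceJacobian x y z u).rank := by
    simpa using card_le_rank_of_det_submatrix_ne_zero _ r c h
  by_cases hy : y = 0 <;> by_cases hz : z = 0
  · have hu : u ≠ 0 := by
      rintro rfl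
      simp [hy, hz] at h₃
    apply minor ![1, 2] ![0, 1]
    rw [det_fin_two]
    simp [surfaceJacobian, hy, hz, hu]
  · have hu : u = 0 := by simpa [hy, hz] using h₂
    apply minor ![1, 2] ![2, 3]
    rw [det_fin_two]
    simp [surfaceJacobian, hy, hu, hz, two_ne_zero]
  · have hy2 : y ^ 2 = 1 := by
      have : (y ^ 2 - 1) * y = 0 := by simpa [hz] using h₂.symm
      simpa [hy, sub_eq_zero] using this
    apply minor ![0, 1] ![0, 1]
    rw [det_fin_two]
    norm_num [surfaceJacobian, hy, hz, hy2, two_ne_zero]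
  · apply minor ![0, 1] ![0, 3]
    rw [det_fin_two]
    simp [surfaceJacobian, hy, hz]

end Surface

/-- The surface `S ⊂ ℂ⁴` defined by `xy=(z²-1)z`, `zu=(y²-1)y`, `xu=(y²-1)(z²-1)`
is smooth: at every point of `S` the Jacobian matrix of the three defining
equations with respect to `(x, y, z, u)` has rank `2`. -/
theorem stmt_9 :
    ∀ x y z u : ℂ,
      x * y = (z ^ 2 - 1) * z →
      z * u = (y ^ 2 - 1) * y →
      x * u = (y ^ 2 - 1) * (z ^ 2 - 1) →
      Matrix.rank
        (!![y, x, 1 - 3 * z ^ 2, 0;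
            0, 1 - 3 * y ^ 2, u, z;
            u, -2 * y * (z ^ 2 - 1), -2 * z * (y ^ 2 - 1), x] : Matrix (Fin 3) (Fin 4) ℂ)
        = 2 := by
  intro x y z u h₁ h₂ h₃
  exact le_antisymm (rank_surfaceJacobian_le_two ⟨h₁, h₂, h₃⟩)
    (two_le_rank_surfaceJacobian ⟨h₁, h₂, h₃⟩)
end

section
/- Let S_q = {(x,y,z) ∈ C^3 : xy = (z−1)(z−2)···(z−q)} for q ≥ 1. Then S_q is a smooth affine surface, and the map φ_x^λ(x,y,z) = (x, ((z+λx−1)···(z+λx−q))/x, z+λx) extends to a fixed-point-free algebraic C^+-action on S_q. -/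
/-!
Write `p(z + t) = p(z) + t · D(z, t)` with the difference quotient
`D(z, t) = (p(z + X) - p(z)) / X` evaluated at `t`, a polynomial in `z` and `t` with
`D(z, 0) = p'(z)`. The flow is `(x, y, z) ↦ (x, y + λ D(z, λx), z + λx)`: multiplying the new
`y`-coordinate by `x` gives `p(z + λx)`, so it preserves `xy = p(z)` and agrees with
`(x, p(z + λx)/x, z + λx)` where `x ≠ 0`. A fixed point with `λ ≠ 0` forces `x = 0`, hence
`p(z) = 0` and `p'(z) = 0`, which a separable `p` excludes; the same fact gives smoothness.
-/

open Polynomial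

namespace Polynomial

variable {R : Type*} [CommRing R]

noncomputable def diffQuot (p : R[X]) (z t : R) : R :=
  (taylor z p).divX.eval t

theorem eval_add_eq_add_mul_diffQuot (p : R[X]) (z t : R) :
    p.eval (z + t) = p.eval z + t * p.diffQuot z t := by
  conv_lhs => rw [add_comm, ← taylor_eval, ← divX_mul_X_add (taylor z p)]
  simp only [diffQuot, eval_add, eval_mul, eval_X, eval_C, taylor_coeff_zero]
  ring

theorem diffQuot_zero (p : R[X]) (z : R) : p.diffQuot z 0 = p.derivative.eval z := by
  rw [diffQuot, ← coeff_zero_eq_eval_zero, coeff_divX, taylor_coeff_one]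

theorem diffQuot_eq_sum (p : R[X]) (z t : R) :
    p.diffQuot z t =
      ∑ k ∈ Finset.range (p.natDegree + 1), (hasseDeriv (k + 1) p).eval z * t ^ k := by
  have hdeg : (taylor z p).divX.natDegree < p.natDegree + 1 :=
    Nat.lt_succ_of_le (natDegree_taylor p z ▸ natDegree_divX_le)
  simp only [diffQuot, eval_eq_sum_range' hdeg, coeff_divX, taylor_coeff]

theorem add_mul_diffQuot_add_mul [IsDomain R] (p : R[X]) (z x t u : R) :
    (t + u) * p.diffQuot z ((t + u) * x) =
      u * p.diffQuot z (u * x) + t * p.diffQuot (z + u * x) (t * x) := by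
  rcases eq_or_ne x 0 with rfl | hx
  · simp only [mul_zero, add_zero, diffQuot_zero]
    ring
  · refine mul_left_cancel₀ hx ?_
    have htu := p.eval_add_eq_add_mul_diffQuot z ((t + u) * x)
    have hu := p.eval_add_eq_add_mul_diffQuot z (u * x)
    have ht := p.eval_add_eq_add_mul_diffQuot (z + u * x) (t * x)
    rw [add_assoc, ← add_mul, add_comm u] at ht
    linear_combination ht - htu + hu

theorem Separable.eval_derivative_ne_zero [Nontrivial R] {p : R[X]} (hp : p.Separable) {z : R}
    (hz : p.eval z = 0) : p.derivative.eval z ≠ 0 :=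
  hp.eval₂_derivative_ne_zero (RingHom.id R) hz

end Polynomial

variable {R : Type*} [CommRing R]

def danielewskiSurface (p : R[X]) : Set (R × R × R) :=
  {s | s.1 * s.2.1 = p.eval s.2.2}

noncomputable def danielewskiFlow (p : R[X]) (t : R) : R × R × R → R × R × R
  | (x, y, z) => (x, y + t * p.diffQuot z (t * x), z + t * x)

section

variable (p : R[X])

@[simp]
theorem danielewskiFlow_mk (t x y z : R) :
    danielewskiFlow p t (x, y, z) = (x, y + t * p.diffQuot z (t * x), z + t * x) :=
  rfl

theorem danielewskiFlow_mem {t : R} {s : R × R × R} (hs : s ∈ danielewskiSurface p) :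
    danielewskiFlow p t s ∈ danielewskiSurface p := by
  obtain ⟨x, y, z⟩ := s
  simp only [danielewskiSurface, Set.mem_ofPred_eq, danielewskiFlow_mk] at hs ⊢
  rw [eval_add_eq_add_mul_diffQuot, ← hs]
  ring

theorem danielewskiFlow_zero (s : R × R × R) : danielewskiFlow p 0 s = s := by
  obtain ⟨x, y, z⟩ := s
  simp

theorem danielewskiFlow_add [IsDomain R] (t u : R) (s : R × R × R) :
    danielewskiFlow p (t + u) s = danielewskiFlow p t (danielewskiFlow p u s) := by
  obtain ⟨x, y, z⟩ := s
  simp only [danielewskiFlow_mk, add_mul_diffQuot_add_mul, Prod.mk.injEq, true_and]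
  constructor <;> ring

theorem exists_mvPolynomial_danielewskiFlow :
    ∃ P : Fin 3 → MvPolynomial (Fin 4) R, ∀ t x y z : R,
      danielewskiFlow p t (x, y, z) =
        (MvPolynomial.eval ![t, x, y, z] (P 0), MvPolynomial.eval ![t, x, y, z] (P 1),
          MvPolynomial.eval ![t, x, y, z] (P 2)) := by
  open MvPolynomial in
  refine ⟨![X 1,
    X 2 + X 0 * ∑ k ∈ Finset.range (p.natDegree + 1),
      (hasseDeriv (k + 1) p).toMvPolynomial 3 * (X 0 * X 1) ^ k,
    X 3 + X 0 * X 1], fun t x y z => ?_⟩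
  simp [diffQuot_eq_sum, eval_toMvPolynomial]

end

theorem danielewskiFlow_eq_of_ne_zero {K : Type*} [Field K] (p : K[X]) (t : K) {x y z : K}
    (hs : x * y = p.eval z) (hx : x ≠ 0) :
    danielewskiFlow p t (x, y, z) = (x, p.eval (z + t * x) / x, z + t * x) := by
  simp only [danielewskiFlow_mk, Prod.mk.injEq, true_and, and_true]
  rw [eq_div_iff hx, eval_add_eq_add_mul_diffQuot, ← hs]
  ring

namespace Polynomial.Separable

variable {p : R[X]}

theorem nonsingular_of_mem_danielewskiSurface [Nontrivial R] (hp : p.Separable) {x y z : R}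
    (hs : (x, y, z) ∈ danielewskiSurface p) :
    y ≠ 0 ∨ x ≠ 0 ∨ p.derivative.eval z ≠ 0 := by
  by_contra! h
  obtain ⟨rfl, rfl, hz'⟩ := h
  exact hp.eval_derivative_ne_zero (by simpa [danielewskiSurface] using hs.symm) hz'

theorem danielewskiFlow_ne_self [IsDomain R] (hp : p.Separable) {t : R} (ht : t ≠ 0)
    {s : R × R × R} (hs : s ∈ danielewskiSurface p) : danielewskiFlow p t s ≠ s := by
  obtain ⟨x, y, z⟩ := s
  intro hfix
  simp only [danielewskiFlow_mk, Prod.mk.injEq, true_and, add_eq_left, mul_eq_zero,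
    ht, false_or] at hfix
  obtain ⟨hy, rfl⟩ := hfix
  rw [mul_zero, diffQuot_zero] at hy
  exact hp.eval_derivative_ne_zero (by simpa [danielewskiSurface] using hs.symm) hy

end Polynomial.Separable

theorem stmt_10_general (q : ℕ) (p : Polynomial ℂ)
    (hp : p = ∏ i ∈ Finset.Icc 1 q, (X - C (i : ℂ))) :
    -- `S_q` is smooth: the gradient `(y, x, -p'(z))` vanishes at no point of `S_q`
    (∀ x y z : ℂ, x * y = p.eval z →
        (y ≠ 0 ∨ x ≠ 0 ∨ (derivative p).eval z ≠ 0)) ∧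
    -- the `ℂ⁺`-action
    ∃ φ : ℂ → (ℂ × ℂ × ℂ) → (ℂ × ℂ × ℂ),
      -- on `x ≠ 0` it is `(x,y,z) ↦ (x, p(z+λx)/x, z+λx)`
      (∀ lam x y z : ℂ, x * y = p.eval z → x ≠ 0 →
        φ lam (x, y, z) = (x, p.eval (z + lam * x) / x, z + lam * x)) ∧
      -- it preserves `S_q`
      (∀ lam : ℂ, ∀ s : ℂ × ℂ × ℂ, s.1 * s.2.1 = p.eval s.2.2 →
        (φ lam s).1 * (φ lam s).2.1 = p.eval (φ lam s).2.2) ∧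
      -- it is an action of the additive group `(ℂ, +)`
      (∀ s : ℂ × ℂ × ℂ, s.1 * s.2.1 = p.eval s.2.2 → φ 0 s = s) ∧
      (∀ lam mu : ℂ, ∀ s : ℂ × ℂ × ℂ, s.1 * s.2.1 = p.eval s.2.2 →
        φ (lam + mu) s = φ lam (φ mu s)) ∧
      -- it is algebraic: each coordinate is a polynomial in `λ, x, y, z`
      (∃ P : Fin 3 → MvPolynomial (Fin 4) ℂ,
        ∀ lam x y z : ℂ, x * y = p.eval z →
          φ lam (x, y, z) =
            (MvPolynomial.eval ![lam, x, y, z] (P 0),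
             MvPolynomial.eval ![lam, x, y, z] (P 1),
             MvPolynomial.eval ![lam, x, y, z] (P 2))) ∧
      -- it is fixed-point free
      (∀ lam : ℂ, lam ≠ 0 → ∀ s : ℂ × ℂ × ℂ, s.1 * s.2.1 = p.eval s.2.2 →
        φ lam s ≠ s) := by
  have hsep : p.Separable := by
    rw [hp]
    exact separable_prod_X_sub_C_iff'.mpr fun i _ j _ h => Nat.cast_injective h
  obtain ⟨P, hP⟩ := exists_mvPolynomial_danielewskiFlow p
  refine ⟨fun x y z hs => hsep.nonsingular_of_mem_danielewskiSurface hs,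
    danielewskiFlow p, fun t x y z hs hx => danielewskiFlow_eq_of_ne_zero p t hs hx,
    fun t s hs => danielewskiFlow_mem p hs, fun s _ => danielewskiFlow_zero p s,
    fun t u s _ => danielewskiFlow_add p t u s, ⟨P, fun t x y z _ => hP t x y z⟩,
    fun t ht s hs => hsep.danielewskiFlow_ne_self ht hs⟩

/-- For `q ≥ 1` and `p(z) = (z-1)(z-2)⋯(z-q)`, the surface
`S_q = {(x,y,z) ∈ ℂ³ : xy = p(z)}` is smooth, and the map
`φ_x^λ(x,y,z) = (x, p(z+λx)/x, z+λx)` extends to a fixed-point-free algebraic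
`ℂ⁺`-action on `S_q` (given in all coordinates by polynomials in `λ, x, y, z`). -/
theorem stmt_10 (q : ℕ) (hq : 1 ≤ q) (p : Polynomial ℂ)
    (hp : p = ∏ i ∈ Finset.Icc 1 q, (X - C (i : ℂ))) :
    -- `S_q` is smooth: the gradient `(y, x, -p'(z))` vanishes at no point of `S_q`
    (∀ x y z : ℂ, x * y = p.eval z →
        (y ≠ 0 ∨ x ≠ 0 ∨ (derivative p).eval z ≠ 0)) ∧
    -- the `ℂ⁺`-action
    ∃ φ : ℂ → (ℂ × ℂ × ℂ) → (ℂ × ℂ × ℂ),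
      -- on `x ≠ 0` it is `(x,y,z) ↦ (x, p(z+λx)/x, z+λx)`
      (∀ lam x y z : ℂ, x * y = p.eval z → x ≠ 0 →
        φ lam (x, y, z) = (x, p.eval (z + lam * x) / x, z + lam * x)) ∧
      -- it preserves `S_q`
      (∀ lam : ℂ, ∀ s : ℂ × ℂ × ℂ, s.1 * s.2.1 = p.eval s.2.2 →
        (φ lam s).1 * (φ lam s).2.1 = p.eval (φ lam s).2.2) ∧
      -- it is an action of the additive group `(ℂ, +)`
      (∀ s : ℂ × ℂ × ℂ, s.1 * s.2.1 = p.eval s.2.2 → φ 0 s = s) ∧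
      (∀ lam mu : ℂ, ∀ s : ℂ × ℂ × ℂ, s.1 * s.2.1 = p.eval s.2.2 →
        φ (lam + mu) s = φ lam (φ mu s)) ∧
      -- it is algebraic: each coordinate is a polynomial in `λ, x, y, z`
      (∃ P : Fin 3 → MvPolynomial (Fin 4) ℂ,
        ∀ lam x y z : ℂ, x * y = p.eval z →
          φ lam (x, y, z) =
            (MvPolynomial.eval ![lam, x, y, z] (P 0),
             MvPolynomial.eval ![lam, x, y, z] (P 1),
             MvPolynomial.eval ![lam, x, y, z] (P 2))) ∧
      -- it is fixed-point free
      (∀ lam : ℂ, lam ≠ 0 → ∀ s : ℂ × ℂ × ℂ, s.1 * s.2.1 = p.eval s.2.2 →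
        φ lam s ≠ s) :=
  stmt_10_general q p hp
end
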